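/- In two-color FLAG COLORING, the Grundy value of the properly 2-colored path graph with x edges (i.e., P_{x+1}, the path on x+1 vertices) is x mod 3. -/

import Mathlib

/-- The minimum excludant of a set of naturals. -/
noncomputable def mexN (S : Set ℕ) : ℕ := sInf {n | n ∉ S}

namespace FlagColoring

variable {V : Type} {C : Type}

/-- The subgraph of `G` induced by the color class `c` of the coloring `f`
(as a graph on the same vertex set). -/
def colorSub (G : SimpleGraph V) (f : V → C) (c : C) : SimpleGraph V where
  Adj u w := G.Adj u w ∧ f u = c ∧ f w = c
  symm := ⟨fun _ _ h => ⟨G.adj_symm h.1, h.2.2, h.2.1⟩⟩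
  loopless := ⟨fun _ h => G.irrefl h.1⟩

open Classical in
/-- One move of FLAG COLORING on the graph `G`: choose a vertex `v` and a color `c'`
different from the color `f v` of `v` and appearing on some neighbor of `v`, and recolor
the whole connected monochromatic component of `v` (its component in the subgraph induced
by the vertices of color `f v`) with `c'`. -/
def Move (G : SimpleGraph V) (f g : V → C) : Prop :=
  ∃ v c', c' ≠ f v ∧ (∃ u, G.Adj v u ∧ f u = c') ∧
    g = fun w => if (colorSub G f (f v)).Reachable v w then c' else f w

open Classical in
/-- The number of ordered pairs of adjacent, differently colored vertices.
Every move strictly decreases this quantity, so it bounds the length of play. -/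
noncomputable def boundary [Fintype V] (G : SimpleGraph V) (f : V → C) : ℕ :=
  (Finset.univ.filter (fun p : V × V => G.Adj p.1 p.2 ∧ f p.1 ≠ f p.2)).card

/-- Grundy value computation with fuel. -/
noncomputable def grundyAux (G : SimpleGraph V) : ℕ → (V → C) → ℕ
  | 0, _ => 0
  | (n+1), f => mexN {k | ∃ g, Move G f g ∧ grundyAux G n g = k}

/-- The Grundy value (nimber) of the FLAG COLORING position `(G, f)`. Since every move
strictly decreases `boundary`, fuel `boundary G f + 1` suffices to compute the true
Grundy value: the mex of the Grundy values of the options (`0` if there are no options).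
A position is a P-position exactly when its Grundy value is `0`. -/
noncomputable def grundy [Fintype V] (G : SimpleGraph V) (f : V → C) : ℕ :=
  grundyAux G (boundary G f + 1) f

end FlagColoring

/-- The path graph with `x` edges on `x + 1` vertices. -/
def pathGraph (x : ℕ) : SimpleGraph (Fin (x + 1)) :=
  SimpleGraph.fromRel (fun u v => (u : ℕ) + 1 = (v : ℕ))

/-- The proper 2-coloring of the path by parity of position. -/
def pathColor (x : ℕ) : Fin (x + 1) → Bool := fun v => decide ((v : ℕ) % 2 = 0)

/-! A two-coloring of the path is determined, up to swapping colors, by its set of color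
changes (edges with differently colored ends). A move recolors a whole maximal monochromatic
segment, so it erases exactly the color changes at the ends of that segment and creates none:
one for a segment at an end of the path, two for an interior one, and it is legal only if there
is at least one. Hence every move lowers the number of color changes by one or two, and both
are possible as long as that many changes remain; the game is the subtraction game `{1, 2}`,
whose Grundy value is the number of color changes mod 3. The alternating coloring has `x`. -/

theorem mexN_eq {S : Set ℕ} {a : ℕ} (ha : a ∉ S) (hlt : ∀ b < a, b ∈ S) : mexN S = a :=
  le_antisymm (Nat.sInf_le ha) (le_csInf ⟨a, ha⟩ fun b hb => not_lt.1 fun h => hb (hlt b h))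

theorem mexN_mod_three (m : ℕ) :
    mexN {k | ∃ j, (j + 1 = m ∨ j + 2 = m) ∧ j % 3 = k} = m % 3 := by
  refine mexN_eq ?_ fun b hb => ⟨m - (m % 3 - b), by omega, by omega⟩
  rintro ⟨j, hj, hjm⟩
  omega

namespace FlagColoring

variable {V C : Type} {G : SimpleGraph V}

/-- The game is the subtraction game with subtraction set `{1, 2}` played on the potential `φ`. -/
theorem grundyAux_eq_mod_three (φ : (V → C) → ℕ)
    (hmove : ∀ f g, Move G f g → φ g + 1 = φ f ∨ φ g + 2 = φ f)
    (hone : ∀ f, 1 ≤ φ f → ∃ g, Move G f g ∧ φ g + 1 = φ f)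
    (htwo : ∀ f, 2 ≤ φ f → ∃ g, Move G f g ∧ φ g + 2 = φ f) :
    ∀ n f, φ f ≤ n → grundyAux G (n + 1) f = φ f % 3 := by
  have step : ∀ m f, (∀ g, Move G f g → grundyAux G m g = φ g % 3) →
      grundyAux G (m + 1) f = φ f % 3 := by
    intro m f hm
    rw [grundyAux, ← mexN_mod_three]
    congr 1
    ext k
    constructor
    · rintro ⟨g, hg, rfl⟩
      exact ⟨φ g, hmove f g hg, (hm g hg).symm⟩
    · rintro ⟨j, hj | hj, rfl⟩
      · obtain ⟨g, hg, hφ⟩ := hone f (by omega)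
        exact ⟨g, hg, by rw [hm g hg]; congr 1; omega⟩
      · obtain ⟨g, hg, hφ⟩ := htwo f (by omega)
        exact ⟨g, hg, by rw [hm g hg]; congr 1; omega⟩
  intro n
  induction n with
  | zero => exact fun f hf => step 0 f fun g hg => by have := hmove f g hg; omega
  | succ n ih =>
    exact fun f hf => step (n + 1) f fun g hg => ih g (by have := hmove f g hg; omega)

end FlagColoring

section Path

open FlagColoring Finset

variable {x : ℕ}

theorem pathGraph_adj {u v : Fin (x + 1)} :
    (pathGraph x).Adj u v ↔ (u : ℕ) + 1 = v ∨ (v : ℕ) + 1 = u := by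
  rw [pathGraph, SimpleGraph.fromRel_adj]
  exact ⟨And.right, fun h => ⟨by rintro rfl; omega, h⟩⟩

theorem pathGraph_adj_castSucc_succ (i : Fin x) : (pathGraph x).Adj i.castSucc i.succ :=
  pathGraph_adj.2 (Or.inl (by simp))

def InBlock (f : Fin (x + 1) → Bool) (v w : Fin (x + 1)) : Prop :=
  ∀ i : Fin (x + 1), min (v : ℕ) w ≤ i → (i : ℕ) ≤ max (v : ℕ) w → f i = f v

namespace InBlock

variable {f : Fin (x + 1) → Bool} {v w : Fin (x + 1)}

theorem refl (f : Fin (x + 1) → Bool) (v : Fin (x + 1)) : InBlock f v v :=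
  fun i h₁ h₂ => by rw [show i = v from Fin.ext (by omega)]

theorem color (h : InBlock f v w) : f w = f v :=
  h w (by omega) (by omega)

theorem symm (h : InBlock f v w) : InBlock f w v :=
  fun i h₁ h₂ => by rw [h.color]; exact h i (by omega) (by omega)

theorem mono {u : Fin (x + 1)} (h : InBlock f v w) (h₁ : min (v : ℕ) w ≤ u)
    (h₂ : (u : ℕ) ≤ max (v : ℕ) w) : InBlock f v u :=
  fun i hi₁ hi₂ => h i (by omega) (by omega)

theorem of_adj {a b : Fin (x + 1)} (h : InBlock f v a) (hab : (pathGraph x).Adj a b)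
    (hb : f b = f v) : InBlock f v b := by
  rw [pathGraph_adj] at hab
  intro i h₁ h₂
  by_cases hib : i = b
  · rw [hib, hb]
  · exact h i (by have := Fin.val_ne_of_ne hib; omega) (by have := Fin.val_ne_of_ne hib; omega)

end InBlock

theorem inBlock_of_reachable {f : Fin (x + 1) → Bool} {v w : Fin (x + 1)}
    (h : (colorSub (pathGraph x) f (f v)).Reachable v w) : InBlock f v w := by
  rw [SimpleGraph.reachable_iff_reflTransGen] at h
  induction h with
  | refl => exact InBlock.refl f v
  | tail _ hbc ih => exact ih.of_adj hbc.1 hbc.2.2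

theorem reachable_of_forall_color_eq {f : Fin (x + 1) → Bool} {v w : Fin (x + 1)} (hvw : v ≤ w)
    (h : ∀ i : Fin x, v ≤ i.castSucc → i.succ ≤ w → f i.castSucc = f i.succ) :
    (colorSub (pathGraph x) f (f v)).Reachable v w := by
  induction w using Fin.induction with
  | zero => rw [le_antisymm hvw (Fin.zero_le v)]
  | succ i ih =>
    rcases eq_or_lt_of_le hvw with rfl | hlt
    · rfl
    have hvi : v ≤ i.castSucc := Fin.le_castSucc_iff.2 hlt
    have hreach := ih hvi fun j hj₁ hj₂ => h j hj₁ (hj₂.trans (Fin.castSucc_le_succ i))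
    have hcolor : f i.castSucc = f v := (inBlock_of_reachable hreach).color
    exact hreach.trans (SimpleGraph.Adj.reachable
      ⟨pathGraph_adj_castSucc_succ i, hcolor, (h i hvi le_rfl ▸ hcolor)⟩)

theorem reachable_iff_inBlock {f : Fin (x + 1) → Bool} {v w : Fin (x + 1)} :
    (colorSub (pathGraph x) f (f v)).Reachable v w ↔ InBlock f v w := by
  refine ⟨inBlock_of_reachable, fun h => ?_⟩
  wlog hvw : v ≤ w generalizing v w
  · have hwv := this h.symm (le_of_not_ge hvw)
    rw [h.color] at hwv
    exact hwv.symm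
  refine reachable_of_forall_color_eq hvw fun i h₁ h₂ => ?_
  have hvi : (v : ℕ) ≤ i := h₁
  have hiw : (i : ℕ) + 1 ≤ w := h₂
  have := Fin.val_castSucc i
  have := Fin.val_succ i
  rw [(h.mono (u := i.castSucc) (by omega) (by omega)).color,
    (h.mono (u := i.succ) (by omega) (by omega)).color]

open Classical in
noncomputable def flipBlock (f : Fin (x + 1) → Bool) (v : Fin (x + 1)) : Fin (x + 1) → Bool :=
  fun w => if InBlock f v w then !f v else f w

theorem move_iff_exists_flipBlock {f g : Fin (x + 1) → Bool} :
    Move (pathGraph x) f g ↔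
      ∃ v, (∃ u, (pathGraph x).Adj v u ∧ f u ≠ f v) ∧ g = flipBlock f v := by
  constructor
  · rintro ⟨v, c, hc, ⟨u, hvu, rfl⟩, rfl⟩
    rw [Bool.eq_not_of_ne hc]
    exact ⟨v, ⟨u, hvu, hc⟩, funext fun w => by
      unfold flipBlock; congr 1; exact propext reachable_iff_inBlock⟩
  · rintro ⟨v, ⟨u, hvu, hu⟩, rfl⟩
    exact ⟨v, !f v, Bool.not_ne_self _, ⟨u, hvu, Bool.eq_not_of_ne hu⟩, funext fun w => by
      unfold flipBlock; congr 1; exact propext reachable_iff_inBlock.symm⟩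

def colorChanges (f : Fin (x + 1) → Bool) : Finset (Fin x) :=
  {i | f i.castSucc ≠ f i.succ}

open Classical in
noncomputable def rightExits (f : Fin (x + 1) → Bool) (v : Fin (x + 1)) : Finset (Fin x) :=
  {i | InBlock f v i.castSucc ∧ ¬InBlock f v i.succ}

open Classical in
noncomputable def leftExits (f : Fin (x + 1) → Bool) (v : Fin (x + 1)) : Finset (Fin x) :=
  {i | ¬InBlock f v i.castSucc ∧ InBlock f v i.succ}

section Exits

variable {f : Fin (x + 1) → Bool} {v : Fin (x + 1)} {i j : Fin x}

@[simp]
theorem mem_colorChanges : i ∈ colorChanges f ↔ f i.castSucc ≠ f i.succ := by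
  simp [colorChanges]

@[simp]
theorem mem_rightExits :
    i ∈ rightExits f v ↔ InBlock f v i.castSucc ∧ ¬InBlock f v i.succ := by
  simp [rightExits]

@[simp]
theorem mem_leftExits :
    i ∈ leftExits f v ↔ ¬InBlock f v i.castSucc ∧ InBlock f v i.succ := by
  simp [leftExits]

theorem color_succ_ne_of_mem_rightExits (h : i ∈ rightExits f v) : f i.succ ≠ f v := by
  rw [mem_rightExits] at h
  exact fun hc => h.2 (h.1.of_adj (pathGraph_adj_castSucc_succ i) hc)

theorem color_castSucc_ne_of_mem_leftExits (h : i ∈ leftExits f v) : f i.castSucc ≠ f v := by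
  rw [mem_leftExits] at h
  exact fun hc => h.1 (h.2.of_adj (pathGraph_adj_castSucc_succ i).symm hc)

theorem le_of_mem_rightExits (h : i ∈ rightExits f v) : (v : ℕ) ≤ i := by
  rw [mem_rightExits] at h
  have := Fin.val_castSucc i
  have := Fin.val_succ i
  by_contra
  exact h.2 (h.1.mono (by omega) (by omega))

theorem lt_of_mem_leftExits (h : i ∈ leftExits f v) : (i : ℕ) < v := by
  rw [mem_leftExits] at h
  have := Fin.val_castSucc i
  have := Fin.val_succ i
  by_contra
  exact h.1 (h.2.mono (by omega) (by omega))

theorem not_lt_of_mem_rightExits (hi : i ∈ rightExits f v) (hj : j ∈ rightExits f v) :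
    ¬i < j := by
  have := le_of_mem_rightExits hi
  have := Fin.val_succ i
  have := Fin.val_castSucc j
  intro (hij : (i : ℕ) < j)
  exact (mem_rightExits.1 hi).2 ((mem_rightExits.1 hj).1.mono (by omega) (by omega))

theorem not_lt_of_mem_leftExits (hi : i ∈ leftExits f v) (hj : j ∈ leftExits f v) :
    ¬i < j := by
  have := lt_of_mem_leftExits hj
  have := Fin.val_succ i
  have := Fin.val_castSucc j
  intro (hij : (i : ℕ) < j)
  exact (mem_leftExits.1 hj).1 ((mem_leftExits.1 hi).2.mono (by omega) (by omega))

theorem card_rightExits_le_one : #(rightExits f v) ≤ 1 :=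
  card_le_one.2 fun _ hi _ hj =>
    le_antisymm (not_lt.1 (not_lt_of_mem_rightExits hj hi))
      (not_lt.1 (not_lt_of_mem_rightExits hi hj))

theorem card_leftExits_le_one : #(leftExits f v) ≤ 1 :=
  card_le_one.2 fun _ hi _ hj =>
    le_antisymm (not_lt.1 (not_lt_of_mem_leftExits hj hi))
      (not_lt.1 (not_lt_of_mem_leftExits hi hj))

theorem disjoint_rightExits_leftExits : Disjoint (rightExits f v) (leftExits f v) :=
  disjoint_left.2 fun _ hr hl => (mem_leftExits.1 hl).1 (mem_rightExits.1 hr).1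

theorem rightExits_union_leftExits_subset_colorChanges :
    rightExits f v ∪ leftExits f v ⊆ colorChanges f := by
  intro i hi
  rw [mem_colorChanges]
  rcases mem_union.1 hi with hr | hl
  · rw [(mem_rightExits.1 hr).1.color]
    exact (color_succ_ne_of_mem_rightExits hr).symm
  · rw [(mem_leftExits.1 hl).2.color]
    exact color_castSucc_ne_of_mem_leftExits hl

theorem colorChanges_flipBlock :
    colorChanges (flipBlock f v) = colorChanges f \ (rightExits f v ∪ leftExits f v) := by
  ext i
  by_cases h₁ : InBlock f v i.castSucc <;> by_cases h₂ : InBlock f v i.succ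
  · simp [flipBlock, h₁, h₂, h₁.color, h₂.color]
  · have hne := color_succ_ne_of_mem_rightExits (mem_rightExits.2 ⟨h₁, h₂⟩)
    simp [flipBlock, h₁, h₂, Bool.eq_not_of_ne hne]
  · have hne := color_castSucc_ne_of_mem_leftExits (mem_leftExits.2 ⟨h₁, h₂⟩)
    simp [flipBlock, h₁, h₂, Bool.eq_not_of_ne hne]
  · simp [flipBlock, h₁, h₂]

theorem card_colorChanges_flipBlock :
    #(colorChanges (flipBlock f v)) + #(rightExits f v) + #(leftExits f v) = #(colorChanges f) := by
  rw [colorChanges_flipBlock, card_sdiff_of_subset rightExits_union_leftExits_subset_colorChanges,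
    card_union_of_disjoint disjoint_rightExits_leftExits]
  have := card_le_card (rightExits_union_leftExits_subset_colorChanges (f := f) (v := v))
  rw [card_union_of_disjoint disjoint_rightExits_leftExits] at this
  omega

theorem card_rightExits_add_card_leftExits_pos {u : Fin (x + 1)} (hvu : (pathGraph x).Adj v u)
    (hu : f u ≠ f v) :
    0 < #(rightExits f v) + #(leftExits f v) := by
  rcases pathGraph_adj.1 hvu with h | h
  · have hsucc : (⟨v, by omega⟩ : Fin x).succ = u := Fin.ext h
    have hi : (⟨v, by omega⟩ : Fin x) ∈ rightExits f v :=
      mem_rightExits.2 ⟨InBlock.refl f v, fun hb => hu (hsucc ▸ hb.color)⟩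
    have := card_pos.2 ⟨_, hi⟩
    omega
  · have hsucc : (⟨u, by omega⟩ : Fin x).succ = v := Fin.ext h
    have hi : (⟨u, by omega⟩ : Fin x) ∈ leftExits f v :=
      mem_leftExits.2 ⟨fun hb => hu hb.color, by rw [hsucc]; exact InBlock.refl f v⟩
    have := card_pos.2 ⟨_, hi⟩
    omega

end Exits

variable {f g : Fin (x + 1) → Bool}

theorem card_colorChanges_of_move (h : Move (pathGraph x) f g) :
    #(colorChanges g) + 1 = #(colorChanges f) ∨ #(colorChanges g) + 2 = #(colorChanges f) := by
  obtain ⟨v, ⟨u, hvu, hu⟩, rfl⟩ := move_iff_exists_flipBlock.1 h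
  have := card_colorChanges_flipBlock (f := f) (v := v)
  have := card_rightExits_add_card_leftExits_pos hvu hu
  have := card_rightExits_le_one (f := f) (v := v)
  have := card_leftExits_le_one (f := f) (v := v)
  omega

theorem exists_move_card_colorChanges_add_one (h : 1 ≤ #(colorChanges f)) :
    ∃ g, Move (pathGraph x) f g ∧ #(colorChanges g) + 1 = #(colorChanges f) := by
  have hne : (colorChanges f).Nonempty := card_pos.1 h
  set i₀ := (colorChanges f).min' hne
  have hi₀ : f i₀.castSucc ≠ f i₀.succ := mem_colorChanges.1 (min'_mem _ hne)
  have hvu := pathGraph_adj_castSucc_succ i₀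
  -- flip the first block: it has no left exit
  refine ⟨flipBlock f i₀.castSucc,
    move_iff_exists_flipBlock.2 ⟨_, ⟨_, hvu, hi₀.symm⟩, rfl⟩, ?_⟩
  have hleft : #(leftExits f i₀.castSucc) = 0 := card_eq_zero.2 <|
    eq_empty_of_forall_notMem fun i hi => by
      have hlt : (i : ℕ) < i₀ := lt_of_mem_leftExits hi
      have hle : i₀ ≤ i :=
        min'_le _ i (rightExits_union_leftExits_subset_colorChanges (mem_union_right _ hi))
      exact absurd hle (not_le.2 hlt)
  have := card_colorChanges_flipBlock (f := f) (v := i₀.castSucc)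
  have := card_rightExits_add_card_leftExits_pos hvu hi₀.symm
  have := card_rightExits_le_one (f := f) (v := i₀.castSucc)
  omega

theorem exists_move_card_colorChanges_add_two (h : 2 ≤ #(colorChanges f)) :
    ∃ g, Move (pathGraph x) f g ∧ #(colorChanges g) + 2 = #(colorChanges f) := by
  have hne : (colorChanges f).Nonempty := card_pos.1 (by omega)
  set i₁ := (colorChanges f).max' hne
  have hne' : ((colorChanges f).erase i₁).Nonempty := by
    rw [← card_pos, card_erase_of_mem (max'_mem _ hne)]; omega
  set i₀ := ((colorChanges f).erase i₁).max' hne'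
  have hi₁ : f i₁.castSucc ≠ f i₁.succ := mem_colorChanges.1 (max'_mem _ hne)
  have hi₀ : f i₀.castSucc ≠ f i₀.succ :=
    mem_colorChanges.1 (mem_of_mem_erase (max'_mem _ hne'))
  have hlt : i₀ < i₁ := lt_of_le_of_ne (le_max' _ _ (mem_of_mem_erase (max'_mem _ hne')))
    (ne_of_mem_erase (max'_mem _ hne'))
  have hgap : ∀ j ∈ colorChanges f, i₀ < j → j = i₁ := fun j hj hij => by
    by_contra hji
    exact absurd (le_max' _ j (mem_erase.2 ⟨hji, hj⟩)) (not_le.2 hij)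
  -- flip the block between the last two color changes: both are exits of it
  set v := i₀.succ
  have hvu := (pathGraph_adj_castSucc_succ i₀).symm
  refine ⟨flipBlock f v, move_iff_exists_flipBlock.2 ⟨v, ⟨_, hvu, hi₀⟩, rfl⟩, ?_⟩
  have hleft : i₀ ∈ leftExits f v :=
    mem_leftExits.2 ⟨fun hb => hi₀ hb.color, InBlock.refl f v⟩
  have hblock : InBlock f v i₁.castSucc := by
    refine inBlock_of_reachable (reachable_of_forall_color_eq (Fin.succ_le_castSucc_iff.2 hlt)
      fun j hj₁ hj₂ => ?_)
    by_contra hj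
    have hj₁ := hgap j (mem_colorChanges.2 hj) (Fin.succ_le_castSucc_iff.1 hj₁)
    subst hj₁
    exact absurd (Fin.succ_le_castSucc_iff.1 hj₂) (lt_irrefl _)
  have hright : i₁ ∈ rightExits f v :=
    mem_rightExits.2 ⟨hblock, fun hb => hi₁ (hblock.color.trans hb.color.symm)⟩
  have := card_colorChanges_flipBlock (f := f) (v := v)
  have := card_pos.2 ⟨_, hleft⟩
  have := card_pos.2 ⟨_, hright⟩
  have := card_rightExits_le_one (f := f) (v := v)
  have := card_leftExits_le_one (f := f) (v := v)
  omega

theorem card_colorChanges_le_boundary (f : Fin (x + 1) → Bool) :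
    #(colorChanges f) ≤ boundary (pathGraph x) f := by
  refine card_le_card_of_injOn (fun i => (i.castSucc, i.succ)) (fun i hi => ?_)
    fun i _ j _ hij => Fin.castSucc_injective _ (congrArg Prod.fst hij)
  simp only [coe_filter, Set.mem_ofPred_eq, mem_univ, true_and]
  exact ⟨pathGraph_adj_castSucc_succ i, mem_colorChanges.1 hi⟩

theorem card_colorChanges_pathColor : #(colorChanges (pathColor x)) = x := by
  rw [show colorChanges (pathColor x) = univ from eq_univ_of_forall fun i => by
    simp only [mem_colorChanges, pathColor, Fin.val_castSucc, Fin.val_succ, ne_eq, decide_eq_decide]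
    omega, card_univ, Fintype.card_fin]

end Path

/-- In two-color FLAG COLORING, the Grundy value of the properly 2-colored path
with `x` edges (the path on `x + 1` vertices) is `x % 3`. -/
theorem path_grundy (x : ℕ) :
    FlagColoring.grundy (pathGraph x) (pathColor x) = x % 3 := by
  rw [FlagColoring.grundy, FlagColoring.grundyAux_eq_mod_three (fun f => (colorChanges f).card)
    (fun _ _ => card_colorChanges_of_move) (fun _ => exists_move_card_colorChanges_add_one)
    (fun _ => exists_move_card_colorChanges_add_two) _ _ (card_colorChanges_le_boundary _),
    card_colorChanges_pathColor]
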